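/- arXiv:2104.14686 — 2 statements merged into one kernel-verified Lean document; each statement's English description precedes it below -/
import Mathlib

section
/- (Uniqueness of boundary complements) Let Σ be a monoidal signature, let i →a1 L ←a2 j and n →b1 G ←b2 m be monogamous cospans of Σ-labelled hypergraphs, and let f : L → G be an injective homomorphism. Then any two boundary complements of f along [a1,a2] are isomorphic: if (C, c : i+j → C, g : C → G, d : n+m → C) and (C', c', g', d') are boundary complements, there exists an isomorphism φ : C → C' with φ∘c = c' and g'∘φ = g. -/
/-!
Comparing the pushout square with the explicit gluing of `L` and `C` along `i + j` shows that
`g` maps the edges of `C` bijectively onto the edges of `G` outside the image of `f`, and that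
`C` has one node `c k` for every interface point `k`, plus one node over each node of `G`
outside the image of `f`. Coding the nodes of `C` accordingly, by `Sum.inl k` or by their image
in `G`, identifies `C` with `C'` over `G`. What does not follow from the pushout alone is that
this identification respects sources and targets: when `L.inp x = L.out y`, the nodes
`c (inl x)` and `c (inr y)` lie over the same node of `G`. The boundary condition settles it:
`c (inl x)` has out-degree `0` and `c (inr y)` in-degree `0`, so `g` is injective on the
sources of `C`, and on its targets.
-/

namespace SDRT

/-- A directed hypergraph: a set of nodes and, for each hyperedge, an ordered
list of source nodes and an ordered list of target nodes.  A `(k,l)`-hyperedge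
is a hyperedge with `k` sources and `l` targets. -/
structure Hyp : Type 1 where
  V : Type
  E : Type
  src : E → List V
  tgt : E → List V

namespace Hyp

/-- The set of pairs `(h, i)` such that `v` is the `i`-th target of the hyperedge `h`.
The in-degree of `v` is the number of such pairs. -/
def inPairs (G : Hyp) (v : G.V) : Set (G.E × ℕ) := {p | (G.tgt p.1)[p.2]? = some v}

/-- The set of pairs `(h, j)` such that `v` is the `j`-th source of the hyperedge `h`.
The out-degree of `v` is the number of such pairs. -/
def outPairs (G : Hyp) (v : G.V) : Set (G.E × ℕ) := {p | (G.src p.1)[p.2]? = some v}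

/-- `v` has in-degree `0`. -/
def inDegZero (G : Hyp) (v : G.V) : Prop := G.inPairs v = ∅

/-- `v` has in-degree `1`. -/
def inDegOne (G : Hyp) (v : G.V) : Prop := ∃! p, p ∈ G.inPairs v

/-- `v` has out-degree `0`. -/
def outDegZero (G : Hyp) (v : G.V) : Prop := G.outPairs v = ∅

/-- `v` has out-degree `1`. -/
def outDegOne (G : Hyp) (v : G.V) : Prop := ∃! p, p ∈ G.outPairs v

/-- `h'` is a successor of `h` if some node is both a target of `h` and a source of `h'`. -/
def Successor (G : Hyp) (h h' : G.E) : Prop := ∃ v, v ∈ G.tgt h ∧ v ∈ G.src h'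

/-- `l` is a path (nonempty sequence of hyperedges, each a successor of the previous)
from the node `v` to the node `v'`: `v` is among the sources of the first hyperedge
and `v'` among the targets of the last one. -/
def PathFrom (G : Hyp) (l : List G.E) (v v' : G.V) : Prop :=
  ∃ hne : l ≠ [], l.Chain' G.Successor ∧ v ∈ G.src (l.head hne) ∧ v' ∈ G.tgt (l.getLast hne)

/-- `l` is a path from the hyperedge `h` to the hyperedge `h'`. -/
def EdgePath (G : Hyp) (l : List G.E) (h h' : G.E) : Prop :=
  ∃ hne : l ≠ [], l.Chain' G.Successor ∧ l.head hne = h ∧ l.getLast hne = h'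

/-- A hypergraph is acyclic if there is no path from a node to itself. -/
def Acyclic (G : Hyp) : Prop := ∀ (v : G.V) (l : List G.E), ¬ G.PathFrom l v v

end Hyp

/-- A subhypergraph: a set of nodes and hyperedges closed under taking the sources
and targets of its hyperedges. -/
structure SubHyp (G : Hyp) where
  nodes : Set G.V
  edges : Set G.E
  src_mem : ∀ e ∈ edges, ∀ v ∈ G.src e, v ∈ nodes
  tgt_mem : ∀ e ∈ edges, ∀ v ∈ G.tgt e, v ∈ nodes

/-- A subhypergraph `H` of `G` is convex if every path in `G` between nodes of `H`
consists only of hyperedges of `H`. -/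
def SubHyp.Convex {G : Hyp} (H : SubHyp G) : Prop :=
  ∀ v ∈ H.nodes, ∀ v' ∈ H.nodes, ∀ l, G.PathFrom l v v' → ∀ e ∈ l, e ∈ H.edges

/-- The hypergraph underlying a subhypergraph. -/
def SubHyp.toHyp {G : Hyp} (H : SubHyp G) : Hyp where
  V := H.nodes
  E := H.edges
  src := fun e => (G.src e.1).pmap (fun v hv => (⟨v, hv⟩ : H.nodes))
    (fun v hv => H.src_mem e.1 e.2 v hv)
  tgt := fun e => (G.tgt e.1).pmap (fun v hv => (⟨v, hv⟩ : H.nodes))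
    (fun v hv => H.tgt_mem e.1 e.2 v hv)

/-- A cospan of hypergraphs with discrete interfaces `m → G ← n`. -/
structure Cospan (m n : Type) : Type 1 where
  G : Hyp
  inp : m → G.V
  out : n → G.V

namespace Cospan

/-- A cospan is monogamous if both legs are injective, nodes in the image of the
input leg have in-degree 0, all other nodes have in-degree 1, nodes in the image
of the output leg have out-degree 0, and all other nodes have out-degree 1. -/
def Monogamous {m n : Type} (A : Cospan m n) : Prop :=
  Function.Injective A.inp ∧ Function.Injective A.out ∧
  (∀ v ∈ Set.range A.inp, A.G.inDegZero v) ∧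
  (∀ v ∉ Set.range A.inp, A.G.inDegOne v) ∧
  (∀ v ∈ Set.range A.out, A.G.outDegZero v) ∧
  (∀ v ∉ Set.range A.out, A.G.outDegOne v)

/-- A cospan is acyclic if its carrier is. -/
def Acyclic {m n : Type} (A : Cospan m n) : Prop := A.G.Acyclic

/-- Composition of cospans by pushout: glue `G` and `H` along the common
interface `n`, identifying `A.out k` with `B.inp k` for every `k : n`. -/
def comp {m n p : Type} (A : Cospan m n) (B : Cospan n p) : Cospan m p where
  G := { V := Quot (fun x y : A.G.V ⊕ B.G.V =>
                      ∃ k : n, x = Sum.inl (A.out k) ∧ y = Sum.inr (B.inp k))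
         E := A.G.E ⊕ B.G.E
         src := Sum.elim (fun e => (A.G.src e).map (fun v => Quot.mk _ (Sum.inl v)))
                         (fun e => (B.G.src e).map (fun v => Quot.mk _ (Sum.inr v)))
         tgt := Sum.elim (fun e => (A.G.tgt e).map (fun v => Quot.mk _ (Sum.inl v)))
                         (fun e => (B.G.tgt e).map (fun v => Quot.mk _ (Sum.inr v))) }
  inp := fun x => Quot.mk _ (Sum.inl (A.inp x))
  out := fun y => Quot.mk _ (Sum.inr (B.out y))

/-- Monoidal product (tensor) of cospans: disjoint union of the carriers, with
the evident interface maps. -/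
def tensor {m₁ n₁ m₂ n₂ : Type} (A : Cospan m₁ n₁) (B : Cospan m₂ n₂) :
    Cospan (m₁ ⊕ m₂) (n₁ ⊕ n₂) where
  G := { V := A.G.V ⊕ B.G.V
         E := A.G.E ⊕ B.G.E
         src := Sum.elim (fun e => (A.G.src e).map Sum.inl) (fun e => (B.G.src e).map Sum.inr)
         tgt := Sum.elim (fun e => (A.G.tgt e).map Sum.inl) (fun e => (B.G.tgt e).map Sum.inr) }
  inp := Sum.elim (fun x => Sum.inl (A.inp x)) (fun x => Sum.inr (B.inp x))
  out := Sum.elim (fun y => Sum.inl (A.out y)) (fun y => Sum.inr (B.out y))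

/-- The identity cospan on `k`: the discrete hypergraph on `k` with identity legs. -/
def idCospan (k : Type) : Cospan k k where
  G := { V := k, E := Empty, src := Empty.elim, tgt := Empty.elim }
  inp := id
  out := id

end Cospan

/-- An isomorphism of cospans: a hypergraph isomorphism of the carriers commuting
with the interface legs. -/
structure CospanIso {m n : Type} (A B : Cospan m n) where
  nodeEquiv : A.G.V ≃ B.G.V
  edgeEquiv : A.G.E ≃ B.G.E
  src_eq : ∀ e, B.G.src (edgeEquiv e) = (A.G.src e).map nodeEquiv
  tgt_eq : ∀ e, B.G.tgt (edgeEquiv e) = (A.G.tgt e).map nodeEquiv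
  inp_eq : ∀ x, nodeEquiv (A.inp x) = B.inp x
  out_eq : ∀ y, nodeEquiv (A.out y) = B.out y

/-- Two cospans are isomorphic if there is an isomorphism between them. -/
def Cospan.Isomorphic {m n : Type} (A B : Cospan m n) : Prop := Nonempty (CospanIso A B)

/-- A homomorphism of hypergraphs: maps nodes to nodes and hyperedges to
hyperedges, preserving the ordered lists of sources and targets. -/
structure HypHom (G H : Hyp) where
  nodeMap : G.V → H.V
  edgeMap : G.E → H.E
  src_eq : ∀ e, H.src (edgeMap e) = (G.src e).map nodeMap
  tgt_eq : ∀ e, H.tgt (edgeMap e) = (G.tgt e).map nodeMap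

/-- The image of a hypergraph homomorphism, as a subhypergraph of the codomain. -/
def HypHom.image {G H : Hyp} (f : HypHom G H) : SubHyp H where
  nodes := Set.range f.nodeMap
  edges := Set.range f.edgeMap
  src_mem := by
    rintro e ⟨e', rfl⟩ v hv
    rw [f.src_eq] at hv
    rcases List.mem_map.mp hv with ⟨w, -, rfl⟩
    exact ⟨w, rfl⟩
  tgt_mem := by
    rintro e ⟨e', rfl⟩ v hv
    rw [f.tgt_eq] at hv
    rcases List.mem_map.mp hv with ⟨w, -, rfl⟩
    exact ⟨w, rfl⟩


/-! ### Labelled hypergraphs -/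

/-- A monoidal signature: a set of operation symbols, each with an arity and a
coarity. -/
structure MonSig : Type 1 where
  ops : Type
  ar : ops → ℕ
  coar : ops → ℕ

/-- A `Σ`-labelled hypergraph: each hyperedge carries a label whose arity and
coarity match the numbers of sources and targets of the hyperedge. -/
structure LHyp (S : MonSig) extends Hyp where
  label : E → S.ops
  src_len : ∀ e, (src e).length = S.ar (label e)
  tgt_len : ∀ e, (tgt e).length = S.coar (label e)

/-- A homomorphism of `Σ`-labelled hypergraphs. -/
structure LHom {S : MonSig} (G H : LHyp S) where
  nodeMap : G.V → H.V
  edgeMap : G.E → H.E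
  src_eq : ∀ e, H.src (edgeMap e) = (G.src e).map nodeMap
  tgt_eq : ∀ e, H.tgt (edgeMap e) = (G.tgt e).map nodeMap
  label_eq : ∀ e, H.label (edgeMap e) = G.label e

/-- Composition (diagrammatic order) of homomorphisms. -/
def LHom.comp {S : MonSig} {G H K : LHyp S} (f : LHom G H) (g : LHom H K) : LHom G K where
  nodeMap := g.nodeMap ∘ f.nodeMap
  edgeMap := g.edgeMap ∘ f.edgeMap
  src_eq := by intro e; simp only [Function.comp_apply, g.src_eq, f.src_eq, List.map_map]
  tgt_eq := by intro e; simp only [Function.comp_apply, g.tgt_eq, f.tgt_eq, List.map_map]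
  label_eq := by intro e; simp only [Function.comp_apply, g.label_eq, f.label_eq]

/-- The underlying homomorphism of unlabelled hypergraphs. -/
def LHom.toHypHom {S : MonSig} {G H : LHyp S} (f : LHom G H) : HypHom G.toHyp H.toHyp :=
  ⟨f.nodeMap, f.edgeMap, f.src_eq, f.tgt_eq⟩

/-- The discrete `Σ`-labelled hypergraph on a set `I` of nodes (no hyperedges). -/
def discreteLHyp (S : MonSig) (I : Type) : LHyp S where
  V := I
  E := Empty
  src := Empty.elim
  tgt := Empty.elim
  label := fun e => e.elim
  src_len := fun e => e.elim
  tgt_len := fun e => e.elim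

/-- A homomorphism out of a discrete hypergraph is just a function on nodes. -/
def discreteHom {S : MonSig} {I : Type} (C : LHyp S) (c : I → C.V) :
    LHom (discreteLHyp S I) C where
  nodeMap := c
  edgeMap := Empty.elim
  src_eq := fun e => e.elim
  tgt_eq := fun e => e.elim
  label_eq := fun e => e.elim

/-- The square `f ; inA = g ; inB` is a pushout of `Σ`-labelled hypergraphs. -/
def IsPushout {S : MonSig} {X A B P : LHyp S} (f : LHom X A) (g : LHom X B)
    (inA : LHom A P) (inB : LHom B P) : Prop :=
  f.comp inA = g.comp inB ∧
  ∀ (W : LHyp S) (u : LHom A W) (w : LHom B W), f.comp u = g.comp w →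
    ∃! t : LHom P W, inA.comp t = u ∧ inB.comp t = w

/-- A cospan of `Σ`-labelled hypergraphs with discrete interfaces. -/
structure LCospan (S : MonSig) (m n : Type) : Type 1 where
  G : LHyp S
  inp : m → G.V
  out : n → G.V

namespace LCospan

/-- The underlying unlabelled cospan. -/
def toCospan {S : MonSig} {m n : Type} (A : LCospan S m n) : Cospan m n :=
  ⟨A.G.toHyp, A.inp, A.out⟩

def Monogamous {S : MonSig} {m n : Type} (A : LCospan S m n) : Prop := A.toCospan.Monogamous

def Acyclic {S : MonSig} {m n : Type} (A : LCospan S m n) : Prop := A.G.toHyp.Acyclic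

/-- Composition of labelled cospans by pushout (gluing along the common interface). -/
def comp {S : MonSig} {m n p : Type} (A : LCospan S m n) (B : LCospan S n p) :
    LCospan S m p where
  G := { V := Quot (fun x y : A.G.V ⊕ B.G.V =>
                      ∃ k : n, x = Sum.inl (A.out k) ∧ y = Sum.inr (B.inp k))
         E := A.G.E ⊕ B.G.E
         src := Sum.elim (fun e => (A.G.src e).map (fun v => Quot.mk _ (Sum.inl v)))
                         (fun e => (B.G.src e).map (fun v => Quot.mk _ (Sum.inr v)))
         tgt := Sum.elim (fun e => (A.G.tgt e).map (fun v => Quot.mk _ (Sum.inl v)))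
                         (fun e => (B.G.tgt e).map (fun v => Quot.mk _ (Sum.inr v)))
         label := Sum.elim A.G.label B.G.label
         src_len := by rintro (e | e) <;> simp [A.G.src_len, B.G.src_len]
         tgt_len := by rintro (e | e) <;> simp [A.G.tgt_len, B.G.tgt_len] }
  inp := fun x => Quot.mk _ (Sum.inl (A.inp x))
  out := fun y => Quot.mk _ (Sum.inr (B.out y))

/-- Monoidal product (disjoint union) of labelled cospans. -/
def tensor {S : MonSig} {m₁ n₁ m₂ n₂ : Type} (A : LCospan S m₁ n₁) (B : LCospan S m₂ n₂) :
    LCospan S (m₁ ⊕ m₂) (n₁ ⊕ n₂) where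
  G := { V := A.G.V ⊕ B.G.V
         E := A.G.E ⊕ B.G.E
         src := Sum.elim (fun e => (A.G.src e).map Sum.inl) (fun e => (B.G.src e).map Sum.inr)
         tgt := Sum.elim (fun e => (A.G.tgt e).map Sum.inl) (fun e => (B.G.tgt e).map Sum.inr)
         label := Sum.elim A.G.label B.G.label
         src_len := by rintro (e | e) <;> simp [A.G.src_len, B.G.src_len]
         tgt_len := by rintro (e | e) <;> simp [A.G.tgt_len, B.G.tgt_len] }
  inp := Sum.elim (fun x => Sum.inl (A.inp x)) (fun x => Sum.inr (B.inp x))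
  out := Sum.elim (fun y => Sum.inl (A.out y)) (fun y => Sum.inr (B.out y))

/-- Reindexing of the interfaces of a cospan along functions. -/
def reind {S : MonSig} {m n m' n' : Type} (A : LCospan S m n) (f : m' → m) (g : n' → n) :
    LCospan S m' n' :=
  ⟨A.G, A.inp ∘ f, A.out ∘ g⟩

end LCospan

/-- An isomorphism of labelled cospans. -/
structure LCospanIso {S : MonSig} {m n : Type} (A B : LCospan S m n) where
  nodeEquiv : A.G.V ≃ B.G.V
  edgeEquiv : A.G.E ≃ B.G.E
  src_eq : ∀ e, B.G.src (edgeEquiv e) = (A.G.src e).map nodeEquiv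
  tgt_eq : ∀ e, B.G.tgt (edgeEquiv e) = (A.G.tgt e).map nodeEquiv
  label_eq : ∀ e, B.G.label (edgeEquiv e) = A.G.label e
  inp_eq : ∀ x, nodeEquiv (A.inp x) = B.inp x
  out_eq : ∀ y, nodeEquiv (A.out y) = B.out y

/-- `A` is a monogamous acyclic cospan. -/
def MonAcyclic {S : MonSig} {m n : Type} (A : LCospan S m n) : Prop :=
  A.Monogamous ∧ A.Acyclic

/-- `(C, c, g)` is a pushout complement of the mono `f : L → G` along the
interface `i + j → L` of the rule. -/
def IsPushoutComplement {S : MonSig} {i j n m : Type} (L : LCospan S i j) (Gc : LCospan S n m)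
    (f : LHom L.G Gc.G) (C : LHyp S) (c : i ⊕ j → C.V) (g : LHom C Gc.G) : Prop :=
  IsPushout (discreteHom L.G (Sum.elim L.inp L.out)) (discreteHom C c) f g

/-- `(C, c, g)` is a boundary complement: a pushout complement in which `c` is mono
and there are `d₁ : n → C`, `d₂ : m → C` commuting with the interface of `G` such
that the cospan `j + n → C ← m + i` is monogamous. -/
def IsBoundaryComplement {S : MonSig} {i j n m : Type} (L : LCospan S i j) (Gc : LCospan S n m)
    (f : LHom L.G Gc.G) (C : LHyp S) (c : i ⊕ j → C.V) (g : LHom C Gc.G) : Prop :=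
  IsPushoutComplement L Gc f C c g ∧ Function.Injective c ∧
  ∃ (d₁ : n → C.V) (d₂ : m → C.V),
    (∀ x, g.nodeMap (d₁ x) = Gc.inp x) ∧ (∀ y, g.nodeMap (d₂ y) = Gc.out y) ∧
    (LCospan.mk C (Sum.elim (fun y : j => c (Sum.inr y)) d₁)
                  (Sum.elim d₂ (fun x : i => c (Sum.inl x)))).Monogamous

/-- A convex DPO rewriting step from `D ← n+m` to `E ← n+m` using the rule
`L ← i+j → R`: a mono matching `f : L → D` with convex image, and a boundary
(pushout) complement `C` such that pasting `R` back along `i+j` yields `E`,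
with all interfaces preserved. -/
def ConvexStep {S : MonSig} {i j n m : Type} (Lr Rr : LCospan S i j)
    (D E : LCospan S n m) : Prop :=
  ∃ (f : LHom Lr.G D.G) (C : LHyp S) (c : i ⊕ j → C.V) (q : n ⊕ m → C.V)
    (g : LHom C D.G) (r : LHom Rr.G E.G) (h : LHom C E.G),
    Function.Injective f.nodeMap ∧ Function.Injective f.edgeMap ∧
    f.toHypHom.image.Convex ∧
    IsPushout (discreteHom Lr.G (Sum.elim Lr.inp Lr.out)) (discreteHom C c) f g ∧
    IsPushout (discreteHom Rr.G (Sum.elim Rr.inp Rr.out)) (discreteHom C c) r h ∧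
    (∀ x, g.nodeMap (q (Sum.inl x)) = D.inp x) ∧
    (∀ y, g.nodeMap (q (Sum.inr y)) = D.out y) ∧
    (∀ x, h.nodeMap (q (Sum.inl x)) = E.inp x) ∧
    (∀ y, h.nodeMap (q (Sum.inr y)) = E.out y) ∧
    Function.Injective c ∧
    (LCospan.mk C (Sum.elim (fun y : j => c (Sum.inr y)) (fun x : n => q (Sum.inl x)))
                  (Sum.elim (fun y : m => q (Sum.inr y)) (fun x : i => c (Sum.inl x)))).Monogamous

end SDRT

theorem Set.InjOn.eq_of_list_map_eq {α β : Type*} {f : α → β} {s : Set α} (hf : Set.InjOn f s) :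
    ∀ {l₁ l₂ : List α}, (∀ x ∈ l₁, x ∈ s) → (∀ x ∈ l₂, x ∈ s) → l₁.map f = l₂.map f → l₁ = l₂
  | [], [], _, _, _ => rfl
  | a :: l₁, b :: l₂, h₁, h₂, h => by
    rw [List.forall_mem_cons] at h₁ h₂
    rw [List.map_cons, List.map_cons, List.cons.injEq] at h
    rw [hf h₁.1 h₂.1 h.1, hf.eq_of_list_map_eq h₁.2 h₂.2 h.2]

noncomputable def Equiv.ofRangeEq {α β γ : Type*} {p : α → γ} {q : β → γ}
    (hp : p.Injective) (hq : q.Injective) (h : Set.range p = Set.range q) : α ≃ β :=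
  (Equiv.ofInjective p hp).trans ((Equiv.setCongr h).trans (Equiv.ofInjective q hq).symm)

theorem Equiv.apply_ofRangeEq {α β γ : Type*} {p : α → γ} {q : β → γ}
    (hp : p.Injective) (hq : q.Injective) (h : Set.range p = Set.range q) (x : α) :
    q (Equiv.ofRangeEq hp hq h x) = p x :=
  Equiv.apply_ofInjective_symm hq _

namespace SDRT

attribute [ext] LHom

def LHom.id {S : MonSig} (G : LHyp S) : LHom G G where
  nodeMap v := v
  edgeMap e := e
  src_eq _ := by simp
  tgt_eq _ := by simp
  label_eq _ := rfl

section Gluing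

variable {α β I : Type*} (a : I → α) (c : I → β)

def GlueRel (x y : α ⊕ β) : Prop := ∃ k, x = Sum.inl (a k) ∧ y = Sum.inr (c k)

open Classical in
noncomputable def glueNormal : α ⊕ β → α ⊕ β :=
  Sum.elim Sum.inl fun v => if h : ∃ k, c k = v then Sum.inl (a h.choose) else Sum.inr v

variable {a c}

theorem glueNormal_inr_apply (hc : c.Injective) (k : I) :
    glueNormal a c (Sum.inr (c k)) = Sum.inl (a k) := by
  have hk : ∃ k', c k' = c k := ⟨k, rfl⟩
  simp only [glueNormal, Sum.elim_inr, dif_pos hk, hc hk.choose_spec]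

theorem glueNormal_eq_of_mk_eq (hc : c.Injective) {x y : α ⊕ β}
    (h : Quot.mk (GlueRel a c) x = Quot.mk (GlueRel a c) y) :
    glueNormal a c x = glueNormal a c y := by
  have hresp : ∀ x y, GlueRel a c x y → glueNormal a c x = glueNormal a c y := by
    rintro _ _ ⟨k, rfl, rfl⟩
    exact (glueNormal_inr_apply hc k).symm
  exact congrArg (Quot.lift (glueNormal a c) hresp) h

theorem exists_of_mk_inr_eq_mk_inl (hc : c.Injective) {v : β} {x : α}
    (h : Quot.mk (GlueRel a c) (Sum.inr v) = Quot.mk (GlueRel a c) (Sum.inl x)) :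
    ∃ k, c k = v ∧ a k = x := by
  have hn := glueNormal_eq_of_mk_eq hc h
  by_cases hv : ∃ k, c k = v
  · obtain ⟨k, rfl⟩ := hv
    rw [glueNormal_inr_apply hc] at hn
    exact ⟨k, rfl, Sum.inl.inj hn⟩
  · simp [glueNormal, dif_neg hv] at hn

theorem eq_or_exists_of_mk_inr_eq_mk_inr (hc : c.Injective) {v w : β}
    (h : Quot.mk (GlueRel a c) (Sum.inr v) = Quot.mk (GlueRel a c) (Sum.inr w)) :
    v = w ∨ ∃ k k', c k = v ∧ c k' = w ∧ a k = a k' := by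
  have hn := glueNormal_eq_of_mk_eq hc h
  by_cases hv : ∃ k, c k = v <;> by_cases hw : ∃ k, c k = w
  · obtain ⟨k, rfl⟩ := hv
    obtain ⟨k', rfl⟩ := hw
    rw [glueNormal_inr_apply hc, glueNormal_inr_apply hc] at hn
    exact Or.inr ⟨k, k', rfl, rfl, Sum.inl.inj hn⟩
  · obtain ⟨k, rfl⟩ := hv
    rw [glueNormal_inr_apply hc] at hn
    simp [glueNormal, dif_neg hw] at hn
  · obtain ⟨k, rfl⟩ := hw
    rw [glueNormal_inr_apply hc] at hn
    simp [glueNormal, dif_neg hv] at hn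
  · simp only [glueNormal, Sum.elim_inr, dif_neg hv, dif_neg hw, Sum.inr.injEq] at hn
    exact Or.inl hn

end Gluing


section Pushout

variable {S : MonSig} {I : Type} {Lg C G : LHyp S}

/-- The pushout of `Lg ← I → C`, built as the composite of the cospans `∅ → Lg ← I` and
`I → C ← ∅`. -/
def gluing (a : I → Lg.V) (c : I → C.V) : LHyp S :=
  (LCospan.comp (⟨Lg, Empty.elim, a⟩ : LCospan S Empty I) ⟨C, c, Empty.elim⟩).G

def gluing.inl (a : I → Lg.V) (c : I → C.V) : LHom Lg (gluing a c) where
  nodeMap v := Quot.mk _ (Sum.inl v)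
  edgeMap := Sum.inl
  src_eq _ := rfl
  tgt_eq _ := rfl
  label_eq _ := rfl

def gluing.inr (a : I → Lg.V) (c : I → C.V) : LHom C (gluing a c) where
  nodeMap v := Quot.mk _ (Sum.inr v)
  edgeMap := Sum.inr
  src_eq _ := rfl
  tgt_eq _ := rfl
  label_eq _ := rfl

def gluing.desc {a : I → Lg.V} {c : I → C.V} (f : LHom Lg G) (g : LHom C G)
    (h : ∀ k, f.nodeMap (a k) = g.nodeMap (c k)) : LHom (gluing a c) G where
  nodeMap := Quot.lift (Sum.elim f.nodeMap g.nodeMap) (by rintro _ _ ⟨k, rfl, rfl⟩; exact h k)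
  edgeMap := Sum.elim f.edgeMap g.edgeMap
  src_eq := by
    rintro (e | e) <;> simp only [gluing, LCospan.comp, Sum.elim_inl, Sum.elim_inr, f.src_eq,
      g.src_eq, List.map_map] <;> rfl
  tgt_eq := by
    rintro (e | e) <;> simp only [gluing, LCospan.comp, Sum.elim_inl, Sum.elim_inr, f.tgt_eq,
      g.tgt_eq, List.map_map] <;> rfl
  label_eq := by
    rintro (e | e) <;> simp only [gluing, LCospan.comp, Sum.elim_inl, Sum.elim_inr, f.label_eq,
      g.label_eq]

variable {a : I → Lg.V} {c : I → C.V} {f : LHom Lg G} {g : LHom C G}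

theorem IsPushout.nodeMap_comm (hPO : IsPushout (discreteHom Lg a) (discreteHom C c) f g)
    (k : I) : f.nodeMap (a k) = g.nodeMap (c k) :=
  congrFun (congrArg LHom.nodeMap hPO.1) k

theorem IsPushout.exists_section (hPO : IsPushout (discreteHom Lg a) (discreteHom C c) f g) :
    ∃ t : LHom G (gluing a c), f.comp t = gluing.inl a c ∧ g.comp t = gluing.inr a c ∧
      t.comp (gluing.desc f g hPO.nodeMap_comm) = LHom.id G := by
  have hglue : (discreteHom Lg a).comp (gluing.inl a c) = (discreteHom C c).comp (gluing.inr a c) :=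
    LHom.ext (funext fun k => Quot.sound ⟨k, rfl, rfl⟩) (funext fun e => e.elim)
  obtain ⟨t, ⟨hft, hgt⟩, -⟩ := hPO.2 _ _ _ hglue
  obtain ⟨u, -, huniq⟩ := hPO.2 G f g hPO.1
  refine ⟨t, hft, hgt, (huniq _ ⟨?_, ?_⟩).trans (huniq _ ⟨rfl, rfl⟩).symm⟩
  · change (f.comp t).comp (gluing.desc f g hPO.nodeMap_comm) = f
    rw [hft]; rfl
  · change (g.comp t).comp (gluing.desc f g hPO.nodeMap_comm) = g
    rw [hgt]; rfl

theorem IsPushout.edgeMap_injective (hPO : IsPushout (discreteHom Lg a) (discreteHom C c) f g) :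
    g.edgeMap.Injective := by
  obtain ⟨t, -, hgt, -⟩ := hPO.exists_section
  intro e₁ e₂ he
  have htg : ∀ e, t.edgeMap (g.edgeMap e) = Sum.inr e := congrFun (congrArg LHom.edgeMap hgt)
  exact Sum.inr_injective ((htg e₁).symm.trans ((congrArg t.edgeMap he).trans (htg e₂)))

theorem IsPushout.range_edgeMap (hPO : IsPushout (discreteHom Lg a) (discreteHom C c) f g) :
    Set.range g.edgeMap = (Set.range f.edgeMap)ᶜ := by
  obtain ⟨t, hft, hgt, hts⟩ := hPO.exists_section
  have htf : ∀ e, t.edgeMap (f.edgeMap e) = Sum.inl e := congrFun (congrArg LHom.edgeMap hft)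
  have htg : ∀ e, t.edgeMap (g.edgeMap e) = Sum.inr e := congrFun (congrArg LHom.edgeMap hgt)
  ext E
  constructor
  · rintro ⟨e, rfl⟩ ⟨e', he'⟩
    exact Sum.inl_ne_inr ((htf e').symm.trans ((congrArg t.edgeMap he').trans (htg e)))
  · intro hE
    have hdesc : (gluing.desc f g hPO.nodeMap_comm).edgeMap (t.edgeMap E) = E :=
      congrFun (congrArg LHom.edgeMap hts) E
    rcases htE : t.edgeMap E with e | e <;> rw [htE] at hdesc
    · exact absurd ⟨e, hdesc⟩ hE
    · exact ⟨e, hdesc⟩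

theorem IsPushout.nodeMap_mem_range (hPO : IsPushout (discreteHom Lg a) (discreteHom C c) f g)
    (w : G.V) : w ∈ Set.range f.nodeMap ∨ w ∈ Set.range g.nodeMap := by
  obtain ⟨t, -, -, hts⟩ := hPO.exists_section
  have hdesc : (gluing.desc f g hPO.nodeMap_comm).nodeMap (t.nodeMap w) = w :=
    congrFun (congrArg LHom.nodeMap hts) w
  obtain ⟨x | v, hx⟩ := Quot.exists_rep (t.nodeMap w) <;> rw [← hx] at hdesc
  · exact Or.inl ⟨x, hdesc⟩
  · exact Or.inr ⟨v, hdesc⟩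

theorem IsPushout.exists_of_nodeMap_eq (hPO : IsPushout (discreteHom Lg a) (discreteHom C c) f g)
    (hc : c.Injective) {v : C.V} {x : Lg.V} (h : g.nodeMap v = f.nodeMap x) :
    ∃ k, c k = v ∧ a k = x := by
  obtain ⟨t, hft, hgt, -⟩ := hPO.exists_section
  exact exists_of_mk_inr_eq_mk_inl hc <| (congrFun (congrArg LHom.nodeMap hgt) v).symm.trans
    ((congrArg t.nodeMap h).trans (congrFun (congrArg LHom.nodeMap hft) x))

theorem IsPushout.eq_or_exists_of_nodeMap_eq
    (hPO : IsPushout (discreteHom Lg a) (discreteHom C c) f g) (hc : c.Injective) {v w : C.V}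
    (h : g.nodeMap v = g.nodeMap w) : v = w ∨ ∃ k k', c k = v ∧ c k' = w ∧ a k = a k' := by
  obtain ⟨t, -, hgt, -⟩ := hPO.exists_section
  exact eq_or_exists_of_mk_inr_eq_mk_inr hc <| (congrFun (congrArg LHom.nodeMap hgt) v).symm.trans
    ((congrArg t.nodeMap h).trans (congrFun (congrArg LHom.nodeMap hgt) w))

open Classical in
noncomputable def nodeCode (c : I → C.V) (g : LHom C G) (v : C.V) : I ⊕ G.V :=
  if h : v ∈ Set.range c then Sum.inl h.choose else Sum.inr (g.nodeMap v)

theorem nodeCode_apply (hc : c.Injective) (k : I) : nodeCode c g (c k) = Sum.inl k := by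
  have hk : c k ∈ Set.range c := ⟨k, rfl⟩
  rw [nodeCode, dif_pos hk, hc hk.choose_spec]

theorem nodeCode_of_notMem_range {v : C.V} (hv : v ∉ Set.range c) :
    nodeCode c g v = Sum.inr (g.nodeMap v) :=
  dif_neg hv

theorem IsPushout.elim_nodeCode (hPO : IsPushout (discreteHom Lg a) (discreteHom C c) f g)
    (hc : c.Injective) (v : C.V) :
    Sum.elim (f.nodeMap ∘ a) id (nodeCode c g v) = g.nodeMap v := by
  by_cases hv : v ∈ Set.range c
  · obtain ⟨k, rfl⟩ := hv
    rw [nodeCode_apply hc]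
    exact hPO.nodeMap_comm k
  · rw [nodeCode_of_notMem_range hv]
    rfl

theorem IsPushout.nodeCode_injective
    (hPO : IsPushout (discreteHom Lg a) (discreteHom C c) f g) (hc : c.Injective) :
    (nodeCode c g).Injective := by
  intro v w hvw
  by_cases hv : v ∈ Set.range c <;> by_cases hw : w ∈ Set.range c
  · obtain ⟨k, rfl⟩ := hv
    obtain ⟨k', rfl⟩ := hw
    rw [nodeCode_apply hc, nodeCode_apply hc, Sum.inl.injEq] at hvw
    rw [hvw]
  · obtain ⟨k, rfl⟩ := hv
    rw [nodeCode_apply hc, nodeCode_of_notMem_range hw] at hvw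
    exact absurd hvw Sum.inl_ne_inr
  · obtain ⟨k, rfl⟩ := hw
    rw [nodeCode_apply hc, nodeCode_of_notMem_range hv] at hvw
    exact absurd hvw Sum.inr_ne_inl
  · rw [nodeCode_of_notMem_range hv, nodeCode_of_notMem_range hw, Sum.inr.injEq] at hvw
    rcases hPO.eq_or_exists_of_nodeMap_eq hc hvw with hvw | ⟨k, -, hk, -⟩
    · exact hvw
    · exact absurd ⟨k, hk⟩ hv

theorem IsPushout.range_nodeCode (hPO : IsPushout (discreteHom Lg a) (discreteHom C c) f g)
    (hc : c.Injective) :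
    Set.range (nodeCode c g) = Set.range Sum.inl ∪ Sum.inr '' (Set.range f.nodeMap)ᶜ := by
  ext z
  constructor
  · rintro ⟨v, rfl⟩
    by_cases hv : v ∈ Set.range c
    · obtain ⟨k, rfl⟩ := hv
      exact Or.inl ⟨k, (nodeCode_apply hc k).symm⟩
    · refine Or.inr ⟨g.nodeMap v, ?_, (nodeCode_of_notMem_range hv).symm⟩
      rintro ⟨x, hx⟩
      obtain ⟨k, hk, -⟩ := hPO.exists_of_nodeMap_eq hc hx.symm
      exact hv ⟨k, hk⟩
  · rintro (⟨k, rfl⟩ | ⟨w, hw, rfl⟩)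
    · exact ⟨c k, nodeCode_apply hc k⟩
    obtain ⟨v, rfl⟩ := (hPO.nodeMap_mem_range w).resolve_left hw
    have hv : v ∉ Set.range c := by
      rintro ⟨k, rfl⟩
      exact hw ⟨a k, hPO.nodeMap_comm k⟩
    exact ⟨v, nodeCode_of_notMem_range hv⟩

end Pushout

theorem Hyp.notMem_src_of_outDegZero {G : Hyp} {v : G.V} (hv : G.outDegZero v) (e : G.E) :
    v ∉ G.src e := fun hmem =>
  let ⟨p, hp⟩ := List.mem_iff_getElem?.1 hmem
  Set.eq_empty_iff_forall_notMem.1 hv (e, p) hp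

theorem Hyp.notMem_tgt_of_inDegZero {G : Hyp} {v : G.V} (hv : G.inDegZero v) (e : G.E) :
    v ∉ G.tgt e := fun hmem =>
  let ⟨p, hp⟩ := List.mem_iff_getElem?.1 hmem
  Set.eq_empty_iff_forall_notMem.1 hv (e, p) hp

namespace IsBoundaryComplement

variable {S : MonSig} {i j n m : Type} {L : LCospan S i j} {Gc : LCospan S n m}
  {f : LHom L.G Gc.G} {C : LHyp S} {c : i ⊕ j → C.V} {g : LHom C Gc.G}

theorem isPushout (h : IsBoundaryComplement L Gc f C c g) :
    IsPushout (discreteHom L.G (Sum.elim L.inp L.out)) (discreteHom C c) f g :=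
  h.1

theorem injective (h : IsBoundaryComplement L Gc f C c g) : c.Injective :=
  h.2.1

theorem outDegZero_inl (h : IsBoundaryComplement L Gc f C c g) (x : i) :
    C.toHyp.outDegZero (c (Sum.inl x)) := by
  obtain ⟨-, -, _, _, -, -, hmono⟩ := h
  exact hmono.2.2.2.2.1 _ ⟨Sum.inr x, rfl⟩

theorem inDegZero_inr (h : IsBoundaryComplement L Gc f C c g) (y : j) :
    C.toHyp.inDegZero (c (Sum.inr y)) := by
  obtain ⟨-, -, _, _, -, -, hmono⟩ := h
  exact hmono.2.2.1 _ ⟨Sum.inl y, rfl⟩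

theorem notMem_range_inl_of_mem_src (h : IsBoundaryComplement L Gc f C c g) {e : C.E}
    {v : C.V} (hv : v ∈ C.src e) : v ∉ Set.range (c ∘ Sum.inl) := by
  rintro ⟨x, rfl⟩
  exact Hyp.notMem_src_of_outDegZero (h.outDegZero_inl x) e hv

theorem notMem_range_inr_of_mem_tgt (h : IsBoundaryComplement L Gc f C c g) {e : C.E}
    {v : C.V} (hv : v ∈ C.tgt e) : v ∉ Set.range (c ∘ Sum.inr) := by
  rintro ⟨y, rfl⟩
  exact Hyp.notMem_tgt_of_inDegZero (h.inDegZero_inr y) e hv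

/-- Distinct nodes of `C` with the same image in `G` are `c (inl x)` and `c (inr y)` with
`L.inp x = L.out y`, since `L.inp` and `L.out` are injective. -/
theorem injOn_nodeMap_inl (hL : L.Monogamous) (h : IsBoundaryComplement L Gc f C c g) :
    Set.InjOn g.nodeMap (Set.range (c ∘ Sum.inl))ᶜ := by
  intro u hu w hw huw
  rcases h.isPushout.eq_or_exists_of_nodeMap_eq h.injective huw with huw | ⟨k, k', rfl, rfl, hkk⟩
  · exact huw
  rcases k with x | y
  · exact absurd ⟨x, rfl⟩ hu
  rcases k' with x | y'
  · exact absurd ⟨x, rfl⟩ hw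
  rw [hL.2.1 hkk]

theorem injOn_nodeMap_inr (hL : L.Monogamous) (h : IsBoundaryComplement L Gc f C c g) :
    Set.InjOn g.nodeMap (Set.range (c ∘ Sum.inr))ᶜ := by
  intro u hu w hw huw
  rcases h.isPushout.eq_or_exists_of_nodeMap_eq h.injective huw with huw | ⟨k, k', rfl, rfl, hkk⟩
  · exact huw
  rcases k with x | y
  swap
  · exact absurd ⟨y, rfl⟩ hu
  rcases k' with x' | y
  swap
  · exact absurd ⟨y, rfl⟩ hw
  rw [hL.1 hkk]

section Uniqueness

variable {C' : LHyp S} {c' : i ⊕ j → C'.V} {g' : LHom C' Gc.G} {φV : C.V → C'.V}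
  {φE : C.E → C'.E}

theorem src_eq_map (hL : L.Monogamous) (h : IsBoundaryComplement L Gc f C c g)
    (h' : IsBoundaryComplement L Gc f C' c' g') (hφV : φV.Injective)
    (hφc : ∀ k, φV (c k) = c' k) (hφg : ∀ v, g'.nodeMap (φV v) = g.nodeMap v)
    (hφE : ∀ e, g'.edgeMap (φE e) = g.edgeMap e) (e : C.E) :
    C'.src (φE e) = (C.src e).map φV := by
  refine (h'.injOn_nodeMap_inl hL).eq_of_list_map_eq
    (fun u hu => h'.notMem_range_inl_of_mem_src hu) ?_ ?_
  · rintro _ hu ⟨x, hx⟩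
    obtain ⟨v, hv, rfl⟩ := List.mem_map.1 hu
    rw [Function.comp_apply, ← hφc] at hx
    exact h.notMem_range_inl_of_mem_src hv ⟨x, hφV hx⟩
  · rw [← g'.src_eq, hφE, g.src_eq, List.map_map]
    exact List.map_congr_left fun v _ => (hφg v).symm

theorem tgt_eq_map (hL : L.Monogamous) (h : IsBoundaryComplement L Gc f C c g)
    (h' : IsBoundaryComplement L Gc f C' c' g') (hφV : φV.Injective)
    (hφc : ∀ k, φV (c k) = c' k) (hφg : ∀ v, g'.nodeMap (φV v) = g.nodeMap v)
    (hφE : ∀ e, g'.edgeMap (φE e) = g.edgeMap e) (e : C.E) :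
    C'.tgt (φE e) = (C.tgt e).map φV := by
  refine (h'.injOn_nodeMap_inr hL).eq_of_list_map_eq
    (fun u hu => h'.notMem_range_inr_of_mem_tgt hu) ?_ ?_
  · rintro _ hu ⟨y, hy⟩
    obtain ⟨v, hv, rfl⟩ := List.mem_map.1 hu
    rw [Function.comp_apply, ← hφc] at hy
    exact h.notMem_range_inr_of_mem_tgt hv ⟨y, hφV hy⟩
  · rw [← g'.tgt_eq, hφE, g.tgt_eq, List.map_map]
    exact List.map_congr_left fun v _ => (hφg v).symm

end Uniqueness

end IsBoundaryComplement

theorem boundary_complement_unique_general {S : MonSig} {i j n m : Type}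
    (L : LCospan S i j) (Gc : LCospan S n m)
    (hL : L.Monogamous)
    (f : LHom L.G Gc.G)
    (C C' : LHyp S) (c : i ⊕ j → C.V) (c' : i ⊕ j → C'.V)
    (g : LHom C Gc.G) (g' : LHom C' Gc.G)
    (h : IsBoundaryComplement L Gc f C c g) (h' : IsBoundaryComplement L Gc f C' c' g') :
    ∃ φ : LHom C C',
      Function.Bijective φ.nodeMap ∧ Function.Bijective φ.edgeMap ∧
      (∀ x, φ.nodeMap (c x) = c' x) ∧ φ.comp g' = g := by
  have hpo := h.isPushout
  have hpo' := h'.isPushout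
  let φV := Equiv.ofRangeEq (hpo.nodeCode_injective h.injective)
    (hpo'.nodeCode_injective h'.injective)
    ((hpo.range_nodeCode h.injective).trans (hpo'.range_nodeCode h'.injective).symm)
  let φE := Equiv.ofRangeEq hpo.edgeMap_injective hpo'.edgeMap_injective
    (hpo.range_edgeMap.trans hpo'.range_edgeMap.symm)
  have hcode : ∀ v, nodeCode c' g' (φV v) = nodeCode c g v := Equiv.apply_ofRangeEq _ _ _
  have hφE : ∀ e, g'.edgeMap (φE e) = g.edgeMap e := Equiv.apply_ofRangeEq _ _ _
  have hφg : ∀ v, g'.nodeMap (φV v) = g.nodeMap v := fun v => by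
    rw [← hpo'.elim_nodeCode h'.injective, hcode, hpo.elim_nodeCode h.injective]
  have hφc : ∀ k, φV (c k) = c' k := fun k => hpo'.nodeCode_injective h'.injective <| by
    rw [hcode, nodeCode_apply h.injective, nodeCode_apply h'.injective]
  refine ⟨⟨φV, φE, h.src_eq_map hL h' φV.injective hφc hφg hφE,
    h.tgt_eq_map hL h' φV.injective hφc hφg hφE, fun e => ?_⟩,
    φV.bijective, φE.bijective, hφc, LHom.ext (funext hφg) (funext hφE)⟩
  rw [← g'.label_eq, hφE, g.label_eq]

/-- **Uniqueness of boundary complements.** Let `i → L ← j` and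
`n → G ← m` be monogamous cospans of `Σ`-labelled hypergraphs and `f : L → G` an
injective homomorphism.  Any two boundary complements of `f` along `[a₁,a₂]` are
isomorphic, via an isomorphism `φ` with `φ ∘ c = c'` and `g' ∘ φ = g`. -/
theorem boundary_complement_unique {S : MonSig} {i j n m : Type}
    [Finite i] [Finite j] [Finite n] [Finite m]
    (L : LCospan S i j) (Gc : LCospan S n m)
    (hL : L.Monogamous) (hG : Gc.Monogamous)
    (f : LHom L.G Gc.G)
    (hfn : Function.Injective f.nodeMap) (hfe : Function.Injective f.edgeMap)
    (C C' : LHyp S) (c : i ⊕ j → C.V) (c' : i ⊕ j → C'.V)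
    (g : LHom C Gc.G) (g' : LHom C' Gc.G)
    (h : IsBoundaryComplement L Gc f C c g) (h' : IsBoundaryComplement L Gc f C' c' g') :
    ∃ φ : LHom C C',
      Function.Bijective φ.nodeMap ∧ Function.Bijective φ.edgeMap ∧
      (∀ x, φ.nodeMap (c x) = c' x) ∧ φ.comp g' = g :=
  boundary_complement_unique_general L Gc hL f C C' c c' g g' h h'

end SDRT
end

section
/- Let m → G ← n be a monogamous acyclic cospan of hypergraphs with discrete interfaces, and let e be any hyperedge of G. Then the subhypergraph L_e of G consisting of the single hyperedge e together with its source and target nodes is convex in G. -/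
namespace SDRT

namespace Hyp

variable {G : Hyp}

lemma PathFrom.append_singleton {l : List G.E} {v w w' : G.V} {e : G.E}
    (hl : G.PathFrom l v w) (hw : w ∈ G.src e) (hw' : w' ∈ G.tgt e) :
    G.PathFrom (l ++ [e]) v w' := by
  obtain ⟨hne, hchain, hv, hlast⟩ := hl
  refine ⟨by simp, hchain.append (List.isChain_singleton e) ?_, ?_, by simpa using hw'⟩
  · intro x hx y hy
    rw [List.getLast?_eq_some_getLast hne, Option.mem_some_iff] at hx
    rw [List.head?_singleton, Option.mem_some_iff] at hy
    exact hx ▸ hy ▸ ⟨w, hlast, hw⟩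
  · rwa [List.head_append_of_ne_nil hne]

lemma PathFrom.of_cons {a : G.E} {l : List G.E} {v w : G.V}
    (hl : G.PathFrom (a :: l) v w) (hne : l ≠ []) :
    ∃ u ∈ G.tgt a, G.PathFrom l u w := by
  obtain ⟨_, hchain, -, hlast⟩ := hl
  obtain ⟨u, hu, hu'⟩ := hchain.rel_head? (List.head?_eq_some_head hne)
  exact ⟨u, hu, hne, hchain.tail, hu', by rwa [List.getLast_cons hne] at hlast⟩

end Hyp

lemma eq_of_mem_of_pairs_subsingleton {V E : Type} (f : E → List V) {v : V}
    (h : {p : E × ℕ | (f p.1)[p.2]? = some v}.Subsingleton) {e₁ e₂ : E}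
    (h₁ : v ∈ f e₁) (h₂ : v ∈ f e₂) : e₁ = e₂ := by
  obtain ⟨i, hi⟩ := List.mem_iff_getElem?.mp h₁
  obtain ⟨j, hj⟩ := List.mem_iff_getElem?.mp h₂
  exact congrArg Prod.fst (@h (e₁, i) hi (e₂, j) hj)

namespace Cospan.Monogamous

variable {m n : Type} {A : Cospan m n}

lemma inPairs_subsingleton (hm : A.Monogamous) (v : A.G.V) : (A.G.inPairs v).Subsingleton := by
  by_cases hv : v ∈ Set.range A.inp
  · rw [hm.2.2.1 v hv]
    exact Set.subsingleton_empty
  · exact (hm.2.2.2.1 v hv).setSubsingleton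

lemma outPairs_subsingleton (hm : A.Monogamous) (v : A.G.V) :
    (A.G.outPairs v).Subsingleton := by
  by_cases hv : v ∈ Set.range A.out
  · rw [hm.2.2.2.2.1 v hv]
    exact Set.subsingleton_empty
  · exact (hm.2.2.2.2.2 v hv).setSubsingleton

lemma eq_of_mem_src (hm : A.Monogamous) {v : A.G.V} {e₁ e₂ : A.G.E}
    (h₁ : v ∈ A.G.src e₁) (h₂ : v ∈ A.G.src e₂) : e₁ = e₂ :=
  eq_of_mem_of_pairs_subsingleton A.G.src (hm.outPairs_subsingleton v) h₁ h₂

lemma eq_of_mem_tgt (hm : A.Monogamous) {v : A.G.V} {e₁ e₂ : A.G.E}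
    (h₁ : v ∈ A.G.tgt e₁) (h₂ : v ∈ A.G.tgt e₂) : e₁ = e₂ :=
  eq_of_mem_of_pairs_subsingleton A.G.tgt (hm.inPairs_subsingleton v) h₁ h₂

/-- A path leaving a target of `e` and ending at a source of `e` closes up through `e`; one ending
at a target of `e` must end with `e` itself, hence returns to its start. -/
lemma not_pathFrom_of_mem_tgt (hm : A.Monogamous) (ha : A.Acyclic) {e : A.G.E}
    {l : List A.G.E} {v v' : A.G.V} (hv : v ∈ A.G.tgt e) (hv' : v' ∈ A.G.src e ∨ v' ∈ A.G.tgt e) :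
    ¬ A.G.PathFrom l v v' := by
  intro hl
  rcases hv' with hv' | hv'
  · exact ha v _ (hl.append_singleton hv' hv)
  · obtain ⟨hne, hchain, hsrc, hlast⟩ := hl
    exact ha v l ⟨hne, hchain, hsrc, hm.eq_of_mem_tgt hlast hv' ▸ hv⟩

end Cospan.Monogamous

/-- Let `m → G ← n` be a monogamous acyclic cospan and `e` a
hyperedge of `G`.  Then the subhypergraph of `G` consisting of the single
hyperedge `e` together with its source and target nodes is convex in `G`. -/
theorem single_edge_convex {m n : Type} (A : Cospan m n)
    (hm : A.Monogamous) (ha : A.Acyclic) (e : A.G.E) :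
    SubHyp.Convex (G := A.G)
      { nodes := {v | v ∈ A.G.src e ∨ v ∈ A.G.tgt e}
        edges := {e}
        src_mem := by
          rintro e' he' v hv
          rw [Set.mem_singleton_iff] at he'
          subst he'
          exact Or.inl hv
        tgt_mem := by
          rintro e' he' v hv
          rw [Set.mem_singleton_iff] at he'
          subst he'
          exact Or.inr hv } := by
  rintro v hv v' hv' l hl a hal
  rcases hv with hv | hv
  · obtain _ | ⟨b, l'⟩ := l
    · exact absurd rfl hl.1
    obtain rfl : b = e := hm.eq_of_mem_src hl.2.2.1 hv
    rcases eq_or_ne l' [] with rfl | hne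
    · exact List.mem_singleton.mp hal
    · obtain ⟨u, hu, hl'⟩ := hl.of_cons hne
      exact absurd hl' (hm.not_pathFrom_of_mem_tgt ha hu hv')
  · exact absurd hl (hm.not_pathFrom_of_mem_tgt ha hv hv')

end SDRT
end
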